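/- For any real-valued function h on ℂ and kernel K_h(w,z) := e^{i h(w)}/(w−z), the symmetrized form S[K_h](z) equals S[K0](z) = c²(z) for every three-tuple z of distinct points in ℂ, where c is the Menger curvature. -/

import Mathlib

open Complex

/-- The Cauchy kernel `K₀(w,z) = 1/(w-z)`. -/
noncomputable def K0 (w z : ℂ) : ℂ := (w - z)⁻¹

/-- The modulated kernel `K_h(w,z) = e^{i h(w)}/(w-z)`. -/
noncomputable def Kh (h : ℂ → ℝ) (w z : ℂ) : ℂ := Complex.exp ((h w : ℂ) * Complex.I) / (w - z)

/-- Menger curvature of three points in the plane. -/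
noncomputable def menger (z1 z2 z3 : ℂ) : ℝ :=
  2 * |((starRingEnd ℂ) (z2 - z1) * (z3 - z1)).im| /
    (‖z1 - z2‖ * ‖z2 - z3‖ * ‖z3 - z1‖)

/-- Symmetrization of a complex kernel over the symmetric group `S₃`. -/
noncomputable def symC (K : ℂ → ℂ → ℂ) (z1 z2 z3 : ℂ) : ℂ :=
  ∑ σ : Equiv.Perm (Fin 3),
    K (![z1, z2, z3] (σ 0)) (![z1, z2, z3] (σ 1)) *
      (starRingEnd ℂ) (K (![z1, z2, z3] (σ 0)) (![z1, z2, z3] (σ 2)))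

lemma univ_perm3 : (Finset.univ : Finset (Equiv.Perm (Fin 3))) =
    {Equiv.refl _, Equiv.swap 0 1, Equiv.swap 0 2, Equiv.swap 1 2,
     (Equiv.swap 0 1).trans (Equiv.swap 0 2), (Equiv.swap 0 2).trans (Equiv.swap 0 1)} := by
  decide

lemma symC_expand (K : ℂ → ℂ → ℂ) (z1 z2 z3 : ℂ) :
    symC K z1 z2 z3 =
      K z1 z2 * (starRingEnd ℂ) (K z1 z3) + K z2 z1 * (starRingEnd ℂ) (K z2 z3) +
      K z3 z2 * (starRingEnd ℂ) (K z3 z1) + K z1 z3 * (starRingEnd ℂ) (K z1 z2) +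
      K z2 z3 * (starRingEnd ℂ) (K z2 z1) + K z3 z1 * (starRingEnd ℂ) (K z3 z2) := by
  rw [symC, univ_perm3, Finset.sum_insert (by decide), Finset.sum_insert (by decide),
    Finset.sum_insert (by decide), Finset.sum_insert (by decide), Finset.sum_insert (by decide),
    Finset.sum_singleton]
  simp (config := { decide := true }) [Equiv.swap_apply_def]
  ring

lemma kh_term (h : ℂ → ℝ) (a b c : ℂ) :
    Kh h a b * (starRingEnd ℂ) (Kh h a c) = K0 a b * (starRingEnd ℂ) (K0 a c) := by
  have key : Complex.exp ((h a : ℂ) * Complex.I) *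
      (starRingEnd ℂ) (Complex.exp ((h a : ℂ) * Complex.I)) = 1 := by
    rw [← Complex.exp_conj, map_mul, Complex.conj_I, Complex.conj_ofReal, ← Complex.exp_add]
    ring_nf
    exact Complex.exp_zero
  rw [Kh, Kh, K0, K0, map_div₀, div_mul_div_comm, key, div_eq_mul_inv, one_mul, mul_inv,
    map_inv₀]

set_option maxHeartbeats 1000000 in
lemma alg (z1 z2 z3 : ℂ) (e12 : z1 - z2 ≠ 0) (e13 : z1 - z3 ≠ 0) (e23 : z2 - z3 ≠ 0) :
    (z1 - z2)⁻¹ * (starRingEnd ℂ) (z1 - z3)⁻¹ + (z2 - z1)⁻¹ * (starRingEnd ℂ) (z2 - z3)⁻¹ +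
      (z3 - z2)⁻¹ * (starRingEnd ℂ) (z3 - z1)⁻¹ + (z1 - z3)⁻¹ * (starRingEnd ℂ) (z1 - z2)⁻¹ +
      (z2 - z3)⁻¹ * (starRingEnd ℂ) (z2 - z1)⁻¹ + (z3 - z1)⁻¹ * (starRingEnd ℂ) (z3 - z2)⁻¹ =
    -((starRingEnd ℂ) (z2 - z1) * (z3 - z1) -
        (starRingEnd ℂ) ((starRingEnd ℂ) (z2 - z1) * (z3 - z1)))^2 /
      ((z1 - z2) * (starRingEnd ℂ) (z1 - z2) * ((z2 - z3) * (starRingEnd ℂ) (z2 - z3)) *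
        ((z3 - z1) * (starRingEnd ℂ) (z3 - z1))) := by
  have cne : ∀ a b : ℂ, a - b ≠ 0 → (starRingEnd ℂ) a - (starRingEnd ℂ) b ≠ 0 := by
    intro a b hab hc
    apply hab
    have := congrArg (starRingEnd ℂ) hc
    simpa [Complex.conj_conj] using this
  have c12 := cne _ _ e12
  have c13 := cne _ _ e13
  have c23 := cne _ _ e23
  simp only [map_inv₀, map_sub, map_mul, Complex.conj_conj]
  rw [show z1 - z3 = (z1 - z2) + (z2 - z3) by ring,
      show z2 - z1 = -(z1 - z2) by ring,
      show z3 - z2 = -(z2 - z3) by ring,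
      show z3 - z1 = -((z1 - z2) + (z2 - z3)) by ring,
      show (starRingEnd ℂ) z1 - (starRingEnd ℂ) z3 =
        ((starRingEnd ℂ) z1 - (starRingEnd ℂ) z2) + ((starRingEnd ℂ) z2 - (starRingEnd ℂ) z3) by ring,
      show (starRingEnd ℂ) z2 - (starRingEnd ℂ) z1 = -((starRingEnd ℂ) z1 - (starRingEnd ℂ) z2) by ring,
      show (starRingEnd ℂ) z3 - (starRingEnd ℂ) z2 = -((starRingEnd ℂ) z2 - (starRingEnd ℂ) z3) by ring,
      show (starRingEnd ℂ) z3 - (starRingEnd ℂ) z1 =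
        -(((starRingEnd ℂ) z1 - (starRingEnd ℂ) z2) + ((starRingEnd ℂ) z2 - (starRingEnd ℂ) z3)) by ring]
  have d13 : z1 - z2 + (z2 - z3) ≠ 0 := by rw [show z1 - z2 + (z2 - z3) = z1 - z3 by ring]; exact e13
  have f13 : (starRingEnd ℂ) z1 - (starRingEnd ℂ) z2 + ((starRingEnd ℂ) z2 - (starRingEnd ℂ) z3) ≠ 0 := by
    rw [show (starRingEnd ℂ) z1 - (starRingEnd ℂ) z2 + ((starRingEnd ℂ) z2 - (starRingEnd ℂ) z3)
      = (starRingEnd ℂ) z1 - (starRingEnd ℂ) z3 by ring]; exact c13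
  generalize (z1 - z2) = a at *
  generalize (z2 - z3) = b at *
  generalize ((starRingEnd ℂ) z1 - (starRingEnd ℂ) z2) = p at *
  generalize ((starRingEnd ℂ) z2 - (starRingEnd ℂ) z3) = q at *
  simp only [inv_neg]
  rw [eq_div_iff (by
    apply mul_ne_zero
    apply mul_ne_zero
    exact mul_ne_zero e12 c12
    exact mul_ne_zero e23 c23
    exact mul_ne_zero (neg_ne_zero.mpr d13) (neg_ne_zero.mpr f13))]
  have hterm : ∀ x y P : ℂ, x ≠ 0 → y ≠ 0 → x⁻¹ * y⁻¹ * (x * y * P) = P := by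
    intro x y P hx hy; field_simp
  have h1 := hterm a (p+q) (p*b*q*(a+b)) e12 f13
  have h2 := hterm a q (p*b*(a+b)*(p+q)) e12 c23
  have h3 := hterm b (p+q) (a*p*q*(a+b)) e23 f13
  have h4 := hterm (a+b) p (a*b*q*(p+q)) d13 c12
  have h5 := hterm b p (a*q*(a+b)*(p+q)) e23 c12
  have h6 := hterm (a+b) q (a*p*b*(p+q)) d13 c23
  linear_combination h1 - h2 + h3 + h4 - h5 + h6

/-- The phase `e^{ih(w)}` cancels under symmetrization: `S[K_h] = S[K₀] = c²`. -/
theorem stmt5 (h : ℂ → ℝ) (z1 z2 z3 : ℂ)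
    (h12 : z1 ≠ z2) (h13 : z1 ≠ z3) (h23 : z2 ≠ z3) :
    symC (Kh h) z1 z2 z3 = symC K0 z1 z2 z3 ∧
      symC (Kh h) z1 z2 z3 = ((menger z1 z2 z3) ^ 2 : ℝ) := by
  have e12 : z1 - z2 ≠ 0 := sub_ne_zero.mpr h12
  have e13 : z1 - z3 ≠ 0 := sub_ne_zero.mpr h13
  have e23 : z2 - z3 ≠ 0 := sub_ne_zero.mpr h23
  have part1 : symC (Kh h) z1 z2 z3 = symC K0 z1 z2 z3 := by
    rw [symC_expand, symC_expand, kh_term, kh_term, kh_term, kh_term, kh_term, kh_term]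
  have habs : ∀ w : ℂ, ((‖w‖ : ℂ))^2 = w * (starRingEnd ℂ) w := fun w => by
    rw [Complex.mul_conj, Complex.normSq_eq_norm_sq]
    push_cast
    ring
  have him : ∀ Y : ℂ, ((Y.im : ℝ) : ℂ) = (Y - (starRingEnd ℂ) Y) / (2 * Complex.I) := fun Y => by
    rw [Complex.sub_conj]
    push_cast
    field_simp
  have hquad : ∀ N : ℂ, (2:ℂ)^2 * (N / (2 * Complex.I))^2 = -N^2 := fun N => by
    rw [div_pow, mul_pow, Complex.I_sq]
    field_simp
  have hm : (menger z1 z2 z3)^2 = 2^2 * (((starRingEnd ℂ) (z2 - z1) * (z3 - z1)).im)^2 /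
      ((‖z1 - z2‖)^2 * (‖z2 - z3‖)^2 * (‖z3 - z1‖)^2) := by
    rw [menger, div_pow, mul_pow, _root_.sq_abs]
    ring_nf
  have part2 : symC K0 z1 z2 z3 = ((menger z1 z2 z3) ^ 2 : ℝ) := by
    rw [symC_expand]
    simp only [K0]
    rw [hm]
    push_cast
    rw [him, hquad, habs, habs, habs]
    exact alg z1 z2 z3 e12 e13 e23
  exact ⟨part1, part1.trans part2⟩
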